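/- Let A be a commutative noetherian ring and f: M → N a homomorphism of finitely generated A-modules. (i) If f is surjective, then the induced map R(f): R(M) → R(N) of Rees algebras is surjective. (ii) If the dual map f*: N* → M* is surjective, then R(f): R(M) → R(N) is injective (equivalently, the preimage of I(N) under Sym(f) equals I(M)). -/

import Mathlib

open Module LinearMap TensorProduct

/-- The relation on the tensor algebra whose quotient is the symmetric algebra. -/
inductive SymRel (A : Type) [CommRing A] (M : Type) [AddCommGroup M] [Module A M] :
    TensorAlgebra A M → TensorAlgebra A M → Prop
  | mul_comm (x y : M) : SymRel A M (TensorAlgebra.ι A x * TensorAlgebra.ι A y)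
      (TensorAlgebra.ι A y * TensorAlgebra.ι A x)

/-- The symmetric algebra `Sym(M)` of a module `M`. -/
abbrev SymmAlg (A : Type) [CommRing A] (M : Type) [AddCommGroup M] [Module A M] : Type :=
  RingQuot (SymRel A M)

variable {A : Type} [CommRing A] {M N L : Type} [AddCommGroup M] [Module A M]
  [AddCommGroup N] [Module A N] [AddCommGroup L] [Module A L]

private lemma symmAlg_comm_aux (x y : TensorAlgebra A M) :
    RingQuot.mkAlgHom A (SymRel A M) x * RingQuot.mkAlgHom A (SymRel A M) y =
      RingQuot.mkAlgHom A (SymRel A M) y * RingQuot.mkAlgHom A (SymRel A M) x := by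
  induction x using TensorAlgebra.induction with
  | algebraMap r => simp [Algebra.commutes]
  | ι m =>
    induction y using TensorAlgebra.induction with
    | algebraMap r => simp [Algebra.commutes]
    | ι n => simpa [map_mul] using (RingQuot.mkAlgHom_rel A (SymRel.mul_comm m n))
    | mul a b ha hb => rw [map_mul, ← mul_assoc, ha, mul_assoc, hb, ← mul_assoc]
    | add a b ha hb => rw [map_add, mul_add, add_mul, ha, hb]
  | mul a b ha hb => rw [map_mul, mul_assoc, hb, ← mul_assoc, ha, mul_assoc]
  | add a b ha hb => rw [map_add, add_mul, mul_add, ha, hb]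

noncomputable instance (A : Type) [CommRing A] (M : Type) [AddCommGroup M] [Module A M] :
    CommRing (SymmAlg A M) :=
  { (inferInstance : Ring (SymmAlg A M)) with
    mul_comm := fun a b => by
      obtain ⟨x, rfl⟩ := RingQuot.mkAlgHom_surjective A (SymRel A M) a
      obtain ⟨y, rfl⟩ := RingQuot.mkAlgHom_surjective A (SymRel A M) b
      exact symmAlg_comm_aux x y }

/-- The canonical inclusion of `M` into the degree-one part of `Sym(M)`. -/
noncomputable def symι (A : Type) [CommRing A] {M : Type} [AddCommGroup M] [Module A M] :
    M →ₗ[A] SymmAlg A M :=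
  (RingQuot.mkAlgHom A (SymRel A M)).toLinearMap ∘ₗ TensorAlgebra.ι A

/-- Functoriality of the symmetric algebra: `Sym(g) : Sym(M) → Sym(N)`. -/
noncomputable def symMap (A : Type) [CommRing A] {M N : Type} [AddCommGroup M] [Module A M]
    [AddCommGroup N] [Module A N] (g : M →ₗ[A] N) : SymmAlg A M →ₐ[A] SymmAlg A N :=
  RingQuot.liftAlgHom A ⟨TensorAlgebra.lift A ((symι A) ∘ₗ g), by
    intro x y h
    cases h with
    | mul_comm a b => simp [mul_comm]⟩

@[simp] lemma symMap_ι (g : M →ₗ[A] N) (m : M) :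
    symMap A g (symι A m) = symι A (g m) := by
  simp [symMap, symι, RingQuot.liftAlgHom_mkAlgHom_apply]

lemma symmAlg_hom_ext {B : Type} [Semiring B] [Algebra A B] {f g : SymmAlg A M →ₐ[A] B}
    (h : ∀ m : M, f (symι A m) = g (symι A m)) : f = g := by
  have key : f.comp (RingQuot.mkAlgHom A (SymRel A M)) =
      g.comp (RingQuot.mkAlgHom A (SymRel A M)) := by
    apply TensorAlgebra.hom_ext
    apply LinearMap.ext
    intro m
    simpa [symι] using h m
  apply AlgHom.ext
  intro x
  obtain ⟨x, rfl⟩ := RingQuot.mkAlgHom_surjective A (SymRel A M) x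
  exact AlgHom.congr_fun key x

lemma symMap_comp_apply (g : N →ₗ[A] L) (f : M →ₗ[A] N) (x : SymmAlg A M) :
    symMap A (g ∘ₗ f) x = symMap A g (symMap A f x) := by
  have : symMap A (g ∘ₗ f) = (symMap A g).comp (symMap A f) := by
    apply symmAlg_hom_ext
    intro m
    simp
  rw [this]; rfl

/-- The data of a linear map from `M` into a finitely generated free module. -/
structure FreeTarget (A : Type) [CommRing A] (M : Type) [AddCommGroup M] [Module A M] where
  E : Type
  [instAddCommGroup : AddCommGroup E]
  [instModule : Module A E]
  [instFree : Module.Free A E]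
  [instFinite : Module.Finite A E]
  g : M →ₗ[A] E

attribute [instance] FreeTarget.instAddCommGroup FreeTarget.instModule
  FreeTarget.instFree FreeTarget.instFinite

/-- The ideal `I(M) ⊆ Sym(M)`: the intersection over all maps `g : M → E` into finitely
generated free modules of the kernels of `Sym(g)`. -/
noncomputable def reesIdeal (A : Type) [CommRing A] (M : Type) [AddCommGroup M]
    [Module A M] : Ideal (SymmAlg A M) :=
  ⨅ d : FreeTarget A M, RingHom.ker (symMap A d.g)

lemma reesIdeal_le_comap (f : M →ₗ[A] N) :
    reesIdeal A M ≤ Ideal.comap (symMap A f) (reesIdeal A N) := by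
  intro x hx
  simp only [reesIdeal, Ideal.mem_iInf] at hx
  simp only [Ideal.mem_comap, reesIdeal, Ideal.mem_iInf]
  intro d
  have hd := hx ⟨d.E, d.g ∘ₗ f⟩
  rw [RingHom.mem_ker] at hd ⊢
  rw [← symMap_comp_apply]
  exact hd

/-- The Rees algebra `R(M) = Sym(M)/I(M)` of a module `M`. -/
noncomputable abbrev ReesAlg (A : Type) [CommRing A] (M : Type) [AddCommGroup M]
    [Module A M] : Type :=
  SymmAlg A M ⧸ reesIdeal A M

/-- The induced map `R(f) : R(M) → R(N)` of Rees algebras. -/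
noncomputable def reesMap (A : Type) [CommRing A] {M N : Type} [AddCommGroup M]
    [Module A M] [AddCommGroup N] [Module A N] (f : M →ₗ[A] N) :
    ReesAlg A M →ₐ[A] ReesAlg A N :=
  Ideal.quotientMapₐ (reesIdeal A N) (symMap A f) (reesIdeal_le_comap f)

/-! Part (i): `Sym(f)` is onto when `f` is, since `Sym(N)` is generated by `N`. Part (ii): a map
`g : M → E` into `E ≅ Aⁿ` is a tuple of functionals on `M`; when `f*` is onto each of them
extends along `f`, so `g` factors through `f` and `Sym(g)` kills whatever `Sym(f)` sends into
`I(N)`. -/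

section

variable {A : Type} [CommRing A] {M N : Type} [AddCommGroup M] [Module A M]
  [AddCommGroup N] [Module A N]

lemma symMap_surjective {f : M →ₗ[A] N} (hf : Function.Surjective f) :
    Function.Surjective (symMap A f) := by
  suffices ∀ t, RingQuot.mkAlgHom A (SymRel A N) t ∈ (symMap A f).range by
    intro y
    obtain ⟨t, rfl⟩ := RingQuot.mkAlgHom_surjective A (SymRel A N) y
    exact this t
  intro t
  induction t using TensorAlgebra.induction with
  | algebraMap r => simp
  | ι n =>
    obtain ⟨m, rfl⟩ := hf n
    exact ⟨symι A m, symMap_ι f m⟩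
  | mul a b ha hb => simpa only [map_mul] using Subalgebra.mul_mem _ ha hb
  | add a b ha hb => simpa only [map_add] using add_mem ha hb

lemma reesMap_surjective {f : M →ₗ[A] N} (hf : Function.Surjective f) :
    Function.Surjective (reesMap A f) :=
  Ideal.quotientMap_surjective (H := reesIdeal_le_comap f) (symMap_surjective hf)

lemma LinearMap.exists_comp_eq_of_surjective_dualMap {E : Type} [AddCommGroup E] [Module A E]
    [Module.Free A E] [Module.Finite A E] {f : M →ₗ[A] N}
    (hf : Function.Surjective f.dualMap) (g : M →ₗ[A] E) : ∃ h : N →ₗ[A] E, h ∘ₗ f = g := by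
  let b := Module.Free.chooseBasis A E
  choose φ hφ using fun i => hf (b.coord i ∘ₗ g)
  refine ⟨b.equivFun.symm.toLinearMap ∘ₗ LinearMap.pi φ, ?_⟩
  ext m
  have hφm (i) : φ i (f m) = b.equivFun (g m) i := LinearMap.congr_fun (hφ i) m
  simp [hφm]

lemma mem_reesIdeal_iff {x : SymmAlg A M} :
    x ∈ reesIdeal A M ↔ ∀ d : FreeTarget A M, symMap A d.g x = 0 := by
  simp only [reesIdeal, Ideal.mem_iInf, RingHom.mem_ker]

lemma comap_symMap_reesIdeal_of_surjective_dualMap {f : M →ₗ[A] N}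
    (hf : Function.Surjective f.dualMap) :
    Ideal.comap (symMap A f) (reesIdeal A N) = reesIdeal A M := by
  refine le_antisymm (fun x hx => ?_) (reesIdeal_le_comap f)
  rw [Ideal.mem_comap, mem_reesIdeal_iff] at hx
  rw [mem_reesIdeal_iff]
  intro d
  obtain ⟨h, hh⟩ := LinearMap.exists_comp_eq_of_surjective_dualMap hf d.g
  rw [← hh, symMap_comp_apply, hx ⟨d.E, h⟩]

lemma reesMap_injective_of_surjective_dualMap {f : M →ₗ[A] N}
    (hf : Function.Surjective f.dualMap) : Function.Injective (reesMap A f) :=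
  Ideal.quotientMap_injective' (H := reesIdeal_le_comap f)
    (comap_symMap_reesIdeal_of_surjective_dualMap hf).le

end

theorem stmt4_general (A : Type) [CommRing A]
    (M N : Type) [AddCommGroup M] [Module A M]
    [AddCommGroup N] [Module A N]
    (f : M →ₗ[A] N) :
    (Function.Surjective f → Function.Surjective (reesMap A f)) ∧
    (Function.Surjective f.dualMap →
      Function.Injective (reesMap A f) ∧
        Ideal.comap (symMap A f) (reesIdeal A N) = reesIdeal A M) :=
  ⟨reesMap_surjective, fun hf => ⟨reesMap_injective_of_surjective_dualMap hf,
    comap_symMap_reesIdeal_of_surjective_dualMap hf⟩⟩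

/-- For `f : M → N`: (i) if `f` is surjective then `R(f) : R(M) → R(N)` is surjective;
(ii) if `f* : N* → M*` is surjective then `R(f)` is injective (equivalently,
the preimage of `I(N)` under `Sym(f)` is `I(M)`). -/
theorem stmt4 (A : Type) [CommRing A] [IsNoetherianRing A]
    (M N : Type) [AddCommGroup M] [Module A M] [Module.Finite A M]
    [AddCommGroup N] [Module A N] [Module.Finite A N]
    (f : M →ₗ[A] N) :
    (Function.Surjective f → Function.Surjective (reesMap A f)) ∧
    (Function.Surjective f.dualMap →
      Function.Injective (reesMap A f) ∧
        Ideal.comap (symMap A f) (reesIdeal A N) = reesIdeal A M) :=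
  stmt4_general A M N f
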